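/- arXiv:2410.10691 — 4 statements merged into one kernel-verified Lean document; each statement's English description precedes it below -/
import Mathlib

section
/- Matrix-Tree theorem for Markov chains: for a finite strongly connected directed graph G with positive edge labels, the vector ρ with components ρ_i = ∑_{T ∈ Θ_i} q(T), where Θ_i is the set of spanning trees of G rooted at vertex i and q(T) = ∏_{e ∈ T} ℓ(e), is a nonzero element of the kernel of the Laplacian L(G). -/
open Finset

attribute [local instance] Classical.propDecidable

/-- `i → j` is an edge of the graph when its label is positive. -/
def IsEdge {n : ℕ} (ℓ : Fin n → Fin n → ℝ) (i j : Fin n) : Prop := 0 < ℓ i j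

/-- Strong connectivity: any two vertices are joined by a directed path of edges. -/
def StronglyConnected {n : ℕ} (ℓ : Fin n → Fin n → ℝ) : Prop :=
  ∀ i j : Fin n, Relation.ReflTransGen (IsEdge ℓ) i j

/-- Reversibility: `i → j` is an edge iff `j → i` is. -/
def Reversible {n : ℕ} (ℓ : Fin n → Fin n → ℝ) : Prop :=
  ∀ i j : Fin n, 0 < ℓ i j ↔ 0 < ℓ j i

/-- The Laplacian matrix: `L j i = ℓ i j` off the diagonal,
`L i i = -∑_{k ≠ i} ℓ i k`. -/
noncomputable def MarkovLaplacian {n : ℕ} (ℓ : Fin n → Fin n → ℝ) :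
    Matrix (Fin n) (Fin n) ℝ :=
  fun j i => if j = i then -∑ k ∈ univ.filter (· ≠ i), ℓ i k else ℓ i j

/-- A spanning tree rooted at `r`, encoded as a parent map `t`: the root is fixed,
every other vertex has a positively-labelled edge to its parent, and iterating
the parent map from any vertex reaches the root. -/
def IsSpanningTree {n : ℕ} (ℓ : Fin n → Fin n → ℝ) (r : Fin n)
    (t : Fin n → Fin n) : Prop :=
  t r = r ∧ (∀ v, v ≠ r → 0 < ℓ v (t v)) ∧ ∀ v, ∃ k, t^[k] v = r

/-- `Θ_r`: the set of spanning trees rooted at `r`. -/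
noncomputable def Trees {n : ℕ} (ℓ : Fin n → Fin n → ℝ) (r : Fin n) :
    Finset (Fin n → Fin n) :=
  univ.filter (IsSpanningTree ℓ r)

/-- `q(T)`: the product of the edge labels over the edges of the tree. -/
noncomputable def treeWeight {n : ℕ} (ℓ : Fin n → Fin n → ℝ) (r : Fin n)
    (t : Fin n → Fin n) : ℝ :=
  ∏ v ∈ univ.filter (· ≠ r), ℓ v (t v)

/-- A directed path from `i` to `j`, as the list of visited vertices. -/
def IsPathFrom {n : ℕ} (ℓ : Fin n → Fin n → ℝ) (i j : Fin n)
    (p : List (Fin n)) : Prop :=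
  p.Chain' (IsEdge ℓ) ∧ p.head? = some i ∧ p.getLast? = some j

/-- A minimal (self-avoiding) path from `i` to `j`: all vertices distinct. -/
def IsMinPathFrom {n : ℕ} (ℓ : Fin n → Fin n → ℝ) (i j : Fin n)
    (p : List (Fin n)) : Prop :=
  IsPathFrom ℓ i j p ∧ p.Nodup

/-- `S(P)`: the action / entropy change of a path, the sum of
`log (ℓ(a→b)/ℓ(b→a))` over its consecutive pairs `a → b`. -/
noncomputable def pathAction {n : ℕ} (ℓ : Fin n → Fin n → ℝ)
    (p : List (Fin n)) : ℝ :=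
  ((p.zip p.tail).map (fun e => Real.log (ℓ e.1 e.2 / ℓ e.2 e.1))).sum

/-- `q(P)`: the product of the labels over the edges of a path. -/
noncomputable def pathWeight {n : ℕ} (ℓ : Fin n → Fin n → ℝ)
    (p : List (Fin n)) : ℝ :=
  ((p.zip p.tail).map (fun e => ℓ e.1 e.2)).prod

/-- The path from `i` to the root `r` along the parent map `t` (fuel `k`). -/
def treePathAux {n : ℕ} (t : Fin n → Fin n) (r : Fin n) :
    ℕ → Fin n → List (Fin n)
  | 0, i => [i]
  | k + 1, i => if i = r then [i] else i :: treePathAux t r k (t i)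

/-- `T_i`: the unique path from `i` to the root `r` on the spanning tree `t`. -/
def treePath {n : ℕ} (t : Fin n → Fin n) (r : Fin n) (i : Fin n) :
    List (Fin n) :=
  treePathAux t r n i

/-- The cycle condition: `S(C) = 0` for every directed cycle `C`
(a directed path whose first and last vertices agree). -/
def CycleCondition {n : ℕ} (ℓ : Fin n → Fin n → ℝ) : Prop :=
  ∀ p : List (Fin n), p.Chain' (IsEdge ℓ) → p.head? = p.getLast? →
    pathAction ℓ p = 0

/-- The tree-reversal map `Φ_{r,j}`: given a tree `t` rooted at `r`, reverse the
edges on the unique tree path from `j` to `r`, obtaining a tree rooted at `j`. -/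
def reverseTree {n : ℕ} (t : Fin n → Fin n) (r j : Fin n) : Fin n → Fin n :=
  fun v =>
    (((treePath t r j).zip (treePath t r j).tail).find? (fun e => e.2 == v)).elim
      (if v = j then j else t v) (fun e => e.1)

/-! Adding to a tree rooted at `a` an edge `a → b` gives a map `f` all of whose edges lie in `G`
and whose orbits all pass through `a`. The `j`-th entry of `L ρ` is the weight flowing into `j`,
`∑_{i ≠ j} ℓ(i→j) ρ_i`, minus the weight flowing out, `ρ_j ∑_{k ≠ j} ℓ(j→k)`. Both count, with
weight `∏_v ℓ(v → f v)`, the maps `f` with `f j ≠ j` through which every orbit reaches `j`: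
cutting `f` at `j` gives a tree rooted at `j` plus an edge out of `j`, and cutting it at the
predecessor of `j` on its (unique) cycle gives a tree rooted there plus an edge into `j`.
Strong connectivity provides one tree, so `ρ ≠ 0`. -/

open Function

section Dynamics

variable {α : Type*}

def ReachableFromAll (f : α → α) (a : α) : Prop := ∀ v, ∃ k, f^[k] v = a

variable {f g : α → α} {a : α}

lemma iterate_eq_iterate_of_eq_off (hfg : ∀ w, w ≠ a → g w = f w) (v : α) :
    ∀ s, (∀ s' < s, f^[s'] v ≠ a) → g^[s] v = f^[s] v
  | 0, _ => rfl
  | s + 1, h => by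
    rw [iterate_succ_apply', iterate_succ_apply',
      iterate_eq_iterate_of_eq_off hfg v s fun s' hs' => h s' (by omega), hfg _ (h s (by omega))]

lemma ReachableFromAll.of_eq_off (h : ReachableFromAll f a) (hfg : ∀ w, w ≠ a → g w = f w) :
    ReachableFromAll g a := by
  classical
  intro v
  refine ⟨Nat.find (h v), ?_⟩
  rw [iterate_eq_iterate_of_eq_off hfg v _ fun s' hs' => Nat.find_min (h v) hs']
  exact Nat.find_spec (h v)

lemma reachableFromAll_update_iff [DecidableEq α] (b : α) :
    ReachableFromAll (update f a b) a ↔ ReachableFromAll f a :=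
  ⟨fun h => h.of_eq_off fun _ hw => (update_of_ne hw _ _).symm,
    fun h => h.of_eq_off fun _ hw => update_of_ne hw _ _⟩

/-- Both `i` and `i'` lie on the unique cycle of `f`, where `f` is injective. -/
lemma ReachableFromAll.eq_of_apply_eq {i i' : α} (hi : ReachableFromAll f i)
    (hi' : ReachableFromAll f i') (h : f i = f i') : i = i' := by
  obtain ⟨p, hp⟩ := hi (f i)
  obtain ⟨m, hm⟩ := hi' i
  have hper : IsPeriodicPt f (p + 1) i' := by
    rw [← hm]
    exact IsPeriodicPt.apply_iterate (by rwa [IsPeriodicPt, IsFixedPt, iterate_succ_apply]) m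
  calc i = f^[p] (f i) := hp.symm
    _ = f^[p] (f i') := by rw [h]
    _ = i' := by rw [← iterate_succ_apply]; exact hper

lemma ne_and_reachableFromAll_iff_exists_pred {j : α} :
    f j ≠ j ∧ ReachableFromAll f j ↔ ∃ i, i ≠ j ∧ f i = j ∧ ReachableFromAll f i := by
  constructor
  · rintro ⟨hfj, hj⟩
    obtain ⟨p, hp⟩ := hj (f j)
    have hfi : f (f^[p] j) = j := by rw [← iterate_succ_apply' f p j, iterate_succ_apply, hp]
    refine ⟨f^[p] j, fun h => hfj (by rwa [h] at hfi), hfi, fun v => ?_⟩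
    obtain ⟨k, hk⟩ := hj v
    exact ⟨p + k, by rw [iterate_add_apply, hk]⟩
  · rintro ⟨i, hij, hfi, hi⟩
    refine ⟨fun hfj => hij ?_, fun v => ?_⟩
    · obtain ⟨k, hk⟩ := hi j
      rw [iterate_fixed hfj] at hk
      exact hk.symm
    · obtain ⟨k, hk⟩ := hi v
      exact ⟨k + 1, by rw [iterate_succ_apply', hk, hfi]⟩

lemma exists_parent_map (R : α → α → Prop) (r : α) (h : ∀ v, Relation.ReflTransGen R v r) :
    ∃ t : α → α, t r = r ∧ (∀ v, v ≠ r → R v (t v)) ∧ ReachableFromAll t r := by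
  classical
  have hpath : ∀ v, ∃ k, ∃ l : List α, l.length = k ∧ List.IsChain R (v :: l) ∧
      (v :: l).getLast (List.cons_ne_nil _ _) = r := fun v => by
    obtain ⟨l, hc, hl⟩ := List.exists_isChain_cons_of_relationReflTransGen (h v)
    exact ⟨l.length, l, rfl, hc, hl⟩
  let d v := Nat.find (hpath v)
  -- the parent of `v` is a neighbour closer to `r`
  have hstep : ∀ v, v ≠ r → ∃ w, R v w ∧ d w < d v := by
    intro v hv
    obtain ⟨l, hlen, hc, hlast⟩ := Nat.find_spec (hpath v)
    cases l with
    | nil => exact absurd hlast hv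
    | cons w l =>
      rw [List.isChain_cons_cons] at hc
      rw [List.getLast_cons (List.cons_ne_nil _ _)] at hlast
      have hw : d w ≤ l.length := Nat.find_le ⟨l, rfl, hc.2, hlast⟩
      have hlen : l.length + 1 = d v := by simpa using hlen
      exact ⟨w, hc.1, by omega⟩
  choose w hw hwd using hstep
  let t v := if hv : v = r then r else w v hv
  have ht : ∀ v (hv : v ≠ r), t v = w v hv := fun v hv => dif_neg hv
  have hreach : ∀ m v, d v ≤ m → ∃ k, t^[k] v = r := by
    intro m
    induction m with
    | zero => exact fun v hv => ⟨0, by_contra fun h => absurd (hwd v h) (by omega)⟩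
    | succ m ih =>
      intro v hv
      by_cases h : v = r
      · exact ⟨0, h⟩
      obtain ⟨k, hk⟩ := ih (w v h) (by have := hwd v h; omega)
      exact ⟨k + 1, by rwa [iterate_succ_apply, ht v h]⟩
  exact ⟨t, dif_pos rfl, fun v hv => ht v hv ▸ hw v hv, fun v => hreach (d v) v le_rfl⟩

end Dynamics

section Trees

variable {n : ℕ} {ℓ : Fin n → Fin n → ℝ}

lemma exists_isSpanningTree (hsc : StronglyConnected ℓ) (r : Fin n) :
    ∃ t, IsSpanningTree ℓ r t :=
  exists_parent_map (IsEdge ℓ) r fun v => hsc v r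

lemma treeWeight_pos {r : Fin n} {t : Fin n → Fin n} (ht : IsSpanningTree ℓ r t) :
    0 < treeWeight ℓ r t :=
  prod_pos fun v hv => ht.2.1 v (mem_filter.mp hv).2

/-- The maps obtained from a spanning tree rooted at `a` by adding the edge `a → b`. -/
noncomputable def treesWithRootEdge (ℓ : Fin n → Fin n → ℝ) (a b : Fin n) :
    Finset (Fin n → Fin n) :=
  univ.filter fun f => (∀ v, 0 < ℓ v (f v)) ∧ f a = b ∧ ReachableFromAll f a

lemma mem_treesWithRootEdge {a b : Fin n} {f : Fin n → Fin n} :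
    f ∈ treesWithRootEdge ℓ a b ↔ (∀ v, 0 < ℓ v (f v)) ∧ f a = b ∧ ReachableFromAll f a := by
  simp [treesWithRootEdge]

lemma mul_treeWeight_eq_prod_update (a b : Fin n) (t : Fin n → Fin n) :
    ℓ a b * treeWeight ℓ a t = ∏ v, ℓ v (update t a b v) := by
  rw [treeWeight, filter_ne', ← mul_prod_erase univ _ (mem_univ a), update_self]
  congr 1
  exact prod_congr rfl fun v hv => by rw [update_of_ne (ne_of_mem_erase hv)]

lemma mul_sum_treeWeight {a b : Fin n} (hab : 0 ≤ ℓ a b) :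
    ℓ a b * ∑ t ∈ Trees ℓ a, treeWeight ℓ a t =
      ∑ f ∈ treesWithRootEdge ℓ a b, ∏ v, ℓ v (f v) := by
  rcases hab.eq_or_lt with hab | hab
  · rw [← hab, zero_mul, eq_comm]
    exact sum_eq_zero fun f hf => by
      obtain ⟨hpos, hfa, -⟩ := mem_treesWithRootEdge.mp hf
      exact absurd hab (hfa ▸ hpos a).ne
  rw [mul_sum]
  refine sum_nbij' (update · a b) (update · a a) (fun t ht => ?_) (fun f hf => ?_)
    (fun t ht => ?_) (fun f hf => ?_) (fun t _ => mul_treeWeight_eq_prod_update a b t)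
  · obtain ⟨-, hpos, hreach⟩ := (mem_filter.mp ht).2
    refine mem_treesWithRootEdge.mpr ⟨fun v => ?_, update_self _ _ _,
      (reachableFromAll_update_iff b).mpr hreach⟩
    by_cases hv : v = a
    · subst hv; rwa [update_self]
    · rw [update_of_ne hv]; exact hpos v hv
  · obtain ⟨hpos, -, hreach⟩ := mem_treesWithRootEdge.mp hf
    refine mem_filter.mpr ⟨mem_univ _, update_self _ _ _, fun v hv => ?_,
      (reachableFromAll_update_iff a).mpr hreach⟩
    rw [update_of_ne hv]; exact hpos v
  · rw [update_idem, update_eq_self_iff]; exact ((mem_filter.mp ht).2.1).symm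
  · rw [update_idem, update_eq_self_iff]; exact ((mem_treesWithRootEdge.mp hf).2.1).symm

lemma pairwiseDisjoint_treesWithRootEdge_left (j : Fin n) :
    (↑(univ.filter (· ≠ j)) : Set (Fin n)).PairwiseDisjoint (treesWithRootEdge ℓ j) :=
  fun _ _ _ _ hkk' => disjoint_left.mpr fun _ hf hf' =>
    hkk' ((mem_treesWithRootEdge.mp hf).2.1.symm.trans (mem_treesWithRootEdge.mp hf').2.1)

lemma pairwiseDisjoint_treesWithRootEdge_right (j : Fin n) :
    (↑(univ.filter (· ≠ j)) : Set (Fin n)).PairwiseDisjoint (treesWithRootEdge ℓ · j) :=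
  fun _ _ _ _ hii' => disjoint_left.mpr fun _ hf hf' => by
    obtain ⟨-, hfi, hi⟩ := mem_treesWithRootEdge.mp hf
    obtain ⟨-, hfi', hi'⟩ := mem_treesWithRootEdge.mp hf'
    exact hii' (hi.eq_of_apply_eq hi' (hfi.trans hfi'.symm))

lemma biUnion_treesWithRootEdge_left_eq_right (j : Fin n) :
    (univ.filter (· ≠ j)).biUnion (treesWithRootEdge ℓ j) =
      (univ.filter (· ≠ j)).biUnion (treesWithRootEdge ℓ · j) := by
  ext f
  simp only [mem_biUnion, mem_filter, mem_univ, true_and, mem_treesWithRootEdge]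
  constructor
  · rintro ⟨k, hkj, hpos, hfj, hj⟩
    obtain ⟨i, hij, hfi, hi⟩ := ne_and_reachableFromAll_iff_exists_pred.mp ⟨hfj ▸ hkj, hj⟩
    exact ⟨i, hij, hpos, hfi, hi⟩
  · rintro ⟨i, hij, hpos, hfi, hi⟩
    obtain ⟨hfj, hj⟩ := ne_and_reachableFromAll_iff_exists_pred.mpr ⟨i, hij, hfi, hi⟩
    exact ⟨f j, hfj, hpos, rfl, hj⟩

lemma markovLaplacian_mulVec_apply (x : Fin n → ℝ) (j : Fin n) :
    (MarkovLaplacian ℓ).mulVec x j =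
      ∑ i ∈ univ.filter (· ≠ j), ℓ i j * x i - (∑ k ∈ univ.filter (· ≠ j), ℓ j k) * x j := by
  rw [Matrix.mulVec, dotProduct, ← sum_filter_add_sum_filter_not univ (· ≠ j)]
  simp only [not_not, filter_eq', mem_univ, if_true, sum_singleton, MarkovLaplacian]
  rw [sum_congr rfl fun i hi => by rw [if_neg (Ne.symm (mem_filter.mp hi).2)]]
  ring

end Trees

/-- Matrix-Tree theorem: the vector `ρ_i = ∑_{T ∈ Θ_i} q(T)` is a nonzero
element of the kernel of the Laplacian. -/
theorem matrix_tree_theorem {n : ℕ} (hn : 0 < n) (ℓ : Fin n → Fin n → ℝ)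
    (hℓ : ∀ i j, 0 ≤ ℓ i j) (hsc : StronglyConnected ℓ) :
    (MarkovLaplacian ℓ).mulVec (fun i => ∑ T ∈ Trees ℓ i, treeWeight ℓ i T) = 0 ∧
    (fun i : Fin n => ∑ T ∈ Trees ℓ i, treeWeight ℓ i T) ≠ 0 := by
  refine ⟨funext fun j => ?_, fun hρ => ?_⟩
  · rw [markovLaplacian_mulVec_apply, Pi.zero_apply, sub_eq_zero, sum_mul,
      sum_congr rfl fun i _ => mul_sum_treeWeight (hℓ i j),
      sum_congr rfl fun k _ => mul_sum_treeWeight (hℓ j k),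
      ← sum_biUnion (pairwiseDisjoint_treesWithRootEdge_right j),
      ← sum_biUnion (pairwiseDisjoint_treesWithRootEdge_left j),
      biUnion_treesWithRootEdge_left_eq_right]
  · let r : Fin n := ⟨0, hn⟩
    obtain ⟨t, ht⟩ := exists_isSpanningTree hsc r
    have hρr : 0 < ∑ T ∈ Trees ℓ r, treeWeight ℓ r T :=
      sum_pos (fun T hT => treeWeight_pos (mem_filter.mp hT).2) ⟨t, mem_filter.mpr ⟨mem_univ _, ht⟩⟩
    exact hρr.ne' (congrFun hρ r)
end

section
/- A finite strongly connected reversible graph G satisfies detailed balance (there exists a positive vector p in ker L(G) with p_i ℓ(i→j) = p_j ℓ(j→i) for all edges i→j) if and only if the cycle condition holds: S(C) = 0 for every directed cycle C. -/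
open Finset

attribute [local instance] Classical.propDecidable

/-- The Laplacian matrix: `L j i = ℓ i j` off the diagonal,
`L i i = -∑_{k ≠ i} ℓ i k`. -/
noncomputable def GraphLaplacian {n : ℕ} (ℓ : Fin n → Fin n → ℝ) :
    Matrix (Fin n) (Fin n) ℝ :=
  fun j i => if j = i then -∑ k ∈ univ.filter (· ≠ i), ℓ i k else ℓ i j

/-!
Both sides amount to the log-ratios `log (ℓ(a→b)/ℓ(b→a))` being the increments `f b - f a`
of a potential `f` along edges: a balanced `p` gives the potential `log p`, and `exp f` is
balanced. Along a path the action of a potential telescopes, so cycles have zero action.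
Conversely, under the cycle condition the action of a path from a fixed root `r` to `i` does
not depend on the path (close it up with the reverse of another one, using reversibility), and
it is a potential. Balancing every pair makes each row of `L p` cancel.
-/

open Real

section

variable {n : ℕ}

def IsDetailedBalanced (ℓ : Fin n → Fin n → ℝ) (p : Fin n → ℝ) : Prop :=
  ∀ i j, 0 < ℓ i j → p i * ℓ i j = p j * ℓ j i

def IsPotential (ℓ : Fin n → Fin n → ℝ) (f : Fin n → ℝ) : Prop :=
  ∀ a b, IsEdge ℓ a b → log (ℓ a b / ℓ b a) = f b - f a

variable {ℓ : Fin n → Fin n → ℝ}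

@[simp]
lemma pathAction_nil : pathAction ℓ [] = 0 := by simp [pathAction]

@[simp]
lemma pathAction_singleton (a : Fin n) : pathAction ℓ [a] = 0 := by simp [pathAction]

lemma pathAction_cons_cons (a b : Fin n) (q : List (Fin n)) :
    pathAction ℓ (a :: b :: q) = log (ℓ a b / ℓ b a) + pathAction ℓ (b :: q) := by
  simp [pathAction]

lemma pathAction_append {p q : List (Fin n)} {a b : Fin n} (hp : p.getLast? = some a)
    (hq : q.head? = some b) :
    pathAction ℓ (p ++ q) = pathAction ℓ p + log (ℓ a b / ℓ b a) + pathAction ℓ q := by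
  obtain ⟨q, rfl⟩ := List.head?_eq_some_iff.mp hq
  induction p with
  | nil => simp at hp
  | cons x p ih =>
    cases p with
    | nil => simp_all [pathAction_cons_cons]
    | cons y p =>
      rw [List.getLast?_cons_cons] at hp
      simp only [List.cons_append, pathAction_cons_cons] at ih ⊢
      rw [ih hp]
      ring

lemma pathAction_reverse (p : List (Fin n)) : pathAction ℓ p.reverse = -pathAction ℓ p := by
  induction p with
  | nil => simp
  | cons a p ih =>
    cases p with
    | nil => simp
    | cons b p =>
      rw [List.reverse_cons, pathAction_append (a := b) (b := a) (by simp) rfl, ih,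
        pathAction_cons_cons, pathAction_singleton, ← inv_div, log_inv]
      ring

lemma IsPathFrom.cons {a b j : Fin n} {p : List (Fin n)} (hab : IsEdge ℓ a b)
    (hp : IsPathFrom ℓ b j p) : IsPathFrom ℓ a j (a :: p) := by
  obtain ⟨hc, hb, hj⟩ := hp
  obtain ⟨p, rfl⟩ := List.head?_eq_some_iff.mp hb
  exact ⟨List.isChain_cons_cons.mpr ⟨hab, hc⟩, rfl, by simpa using hj⟩

lemma IsPathFrom.append {i j k m : Fin n} {p q : List (Fin n)} (hp : IsPathFrom ℓ i j p)
    (hjk : IsEdge ℓ j k) (hq : IsPathFrom ℓ k m q) : IsPathFrom ℓ i m (p ++ q) := by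
  obtain ⟨hpc, hpi, hpj⟩ := hp
  obtain ⟨hqc, hqk, hqm⟩ := hq
  refine ⟨List.isChain_append.mpr ⟨hpc, hqc, ?_⟩, ?_, ?_⟩
  · simp_all
  · simp_all [List.head?_append]
  · simp_all [List.getLast?_append]

lemma IsPathFrom.reverse (hrev : Reversible ℓ) {i j : Fin n} {p : List (Fin n)}
    (hp : IsPathFrom ℓ i j p) : IsPathFrom ℓ j i p.reverse := by
  obtain ⟨hc, hi, hj⟩ := hp
  refine ⟨List.isChain_reverse.mpr (hc.imp fun a b => (hrev a b).mp), ?_, ?_⟩ <;> simpa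

lemma exists_isPathFrom {i j : Fin n} (h : Relation.ReflTransGen (IsEdge ℓ) i j) :
    ∃ p, IsPathFrom ℓ i j p := by
  induction h using Relation.ReflTransGen.head_induction_on with
  | refl => exact ⟨[j], List.isChain_singleton j, rfl, rfl⟩
  | head hab _ ih =>
    obtain ⟨p, hp⟩ := ih
    exact ⟨_, hp.cons hab⟩

lemma cycleCondition_iff :
    CycleCondition ℓ ↔ ∀ i p, IsPathFrom ℓ i i p → pathAction ℓ p = 0 := by
  refine ⟨fun hcc i p hp => hcc p hp.1 (hp.2.1.trans hp.2.2.symm), fun h p hc hp => ?_⟩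
  cases hi : p.head? with
  | none => simp [List.head?_eq_none_iff.mp hi]
  | some i => exact h i p ⟨hc, hi, hp ▸ hi⟩

lemma IsPotential.pathAction_eq {f : Fin n → ℝ} (hf : IsPotential ℓ f) {i j : Fin n}
    {p : List (Fin n)} (hp : IsPathFrom ℓ i j p) : pathAction ℓ p = f j - f i := by
  induction p generalizing i with
  | nil => simp [IsPathFrom] at hp
  | cons x p ih =>
    obtain ⟨hc, hi, hj⟩ := hp
    obtain rfl : x = i := by simpa using hi
    cases p with
    | nil => simp_all
    | cons y q =>
      obtain ⟨hxy, hc⟩ := List.isChain_cons_cons.mp hc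
      rw [pathAction_cons_cons, hf _ _ hxy, ih ⟨hc, rfl, by simpa using hj⟩]
      ring

lemma IsPotential.cycleCondition {f : Fin n → ℝ} (hf : IsPotential ℓ f) :
    CycleCondition ℓ :=
  cycleCondition_iff.mpr fun _ _ hp => by rw [hf.pathAction_eq hp, sub_self]

lemma IsPotential.isDetailedBalanced_exp (hrev : Reversible ℓ) {f : Fin n → ℝ}
    (hf : IsPotential ℓ f) : IsDetailedBalanced ℓ (fun i => exp (f i)) := by
  intro a b hab
  have hba : 0 < ℓ b a := (hrev a b).mp hab
  have hexp : exp (f b) = exp (f a) * (ℓ a b / ℓ b a) := by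
    rw [← exp_log (div_pos hab hba), ← exp_add, hf a b hab, add_sub_cancel]
  show exp (f a) * ℓ a b = exp (f b) * ℓ b a
  rw [hexp]
  field_simp

lemma IsDetailedBalanced.isPotential_log {p : Fin n → ℝ} (hp : ∀ i, 0 < p i)
    (h : IsDetailedBalanced ℓ p) : IsPotential ℓ (fun i => log (p i)) := by
  intro a b hab
  have hba : ℓ b a ≠ 0 := fun h0 => by
    simpa [h0, (hp a).ne', hab.ne'] using h a b hab
  rw [← log_div (hp b).ne' (hp a).ne']
  congr 1
  rw [div_eq_div_iff hba (hp a).ne']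
  linarith [h a b hab]

lemma CycleCondition.isPotential_pathAction (hrev : Reversible ℓ) (hcc : CycleCondition ℓ)
    {r : Fin n} {P : Fin n → List (Fin n)} (hP : ∀ i, IsPathFrom ℓ r i (P i)) :
    IsPotential ℓ (fun i => pathAction ℓ (P i)) := by
  intro i j hij
  have hcycle := cycleCondition_iff.mp hcc r _ ((hP i).append hij ((hP j).reverse hrev))
  rw [pathAction_append (hP i).2.2 ((hP j).reverse hrev).2.1, pathAction_reverse] at hcycle
  linarith

lemma CycleCondition.exists_isPotential (hsc : StronglyConnected ℓ) (hrev : Reversible ℓ)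
    (hcc : CycleCondition ℓ) (r : Fin n) : ∃ f, IsPotential ℓ f := by
  choose P hP using fun i => exists_isPathFrom (hsc r i)
  exact ⟨_, hcc.isPotential_pathAction hrev hP⟩

lemma IsDetailedBalanced.mul_eq_mul (hℓ : ∀ i j, 0 ≤ ℓ i j) (hrev : Reversible ℓ)
    {p : Fin n → ℝ} (h : IsDetailedBalanced ℓ p) (i j : Fin n) :
    p i * ℓ i j = p j * ℓ j i := by
  by_cases hij : 0 < ℓ i j
  · exact h i j hij
  · have hji : ¬ 0 < ℓ j i := fun hji => hij ((hrev j i).mp hji)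
    rw [le_antisymm (not_lt.mp hij) (hℓ i j), le_antisymm (not_lt.mp hji) (hℓ j i)]
    ring

lemma IsDetailedBalanced.graphLaplacian_mulVec_eq_zero (hℓ : ∀ i j, 0 ≤ ℓ i j)
    (hrev : Reversible ℓ) {p : Fin n → ℝ} (h : IsDetailedBalanced ℓ p) :
    (GraphLaplacian ℓ).mulVec p = 0 := by
  funext j
  have hoff : ∀ i ∈ univ.erase j, GraphLaplacian ℓ j i * p i = ℓ j i * p j := fun i hi => by
    rw [GraphLaplacian, if_neg (ne_of_mem_erase hi).symm, mul_comm, h.mul_eq_mul hℓ hrev,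
      mul_comm]
  rw [Matrix.mulVec, dotProduct, Pi.zero_apply, ← add_sum_erase _ _ (mem_univ j),
    sum_congr rfl hoff, GraphLaplacian, if_pos rfl, filter_ne', ← sum_mul]
  ring

end

/-- Detailed balance (a positive steady state balancing every edge with its
reverse) holds if and only if the cycle condition holds. -/
theorem detailed_balance_iff_cycle_condition {n : ℕ} (hn : 0 < n)
    (ℓ : Fin n → Fin n → ℝ) (hℓ : ∀ i j, 0 ≤ ℓ i j)
    (hsc : StronglyConnected ℓ) (hrev : Reversible ℓ) :
    (∃ p : Fin n → ℝ, (∀ i, 0 < p i) ∧ (GraphLaplacian ℓ).mulVec p = 0 ∧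
      ∀ i j, 0 < ℓ i j → p i * ℓ i j = p j * ℓ j i) ↔ CycleCondition ℓ := by
  constructor
  · rintro ⟨p, hp, -, hdb⟩
    exact (IsDetailedBalanced.isPotential_log hp hdb).cycleCondition
  · intro hcc
    obtain ⟨f, hf⟩ := hcc.exists_isPotential hsc hrev ⟨0, hn⟩
    have hdb := hf.isDetailedBalanced_exp hrev
    exact ⟨_, fun i => exp_pos _, hdb.graphLaplacian_mulVec_eq_zero hℓ hrev, hdb⟩
end

section
/- For a finite strongly connected reversible graph G, the vector with components ρ̃_i(G) = ∑_{T ∈ Θ_1} exp(-S(T_i)) q(T) is equal to the Matrix-Tree vector, i.e., ρ̃_i(G) = ∑_{T' ∈ Θ_i} q(T') for every vertex i. -/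
open Finset

attribute [local instance] Classical.propDecidable

/-- The Laplacian matrix: `L j i = ℓ i j` off the diagonal,
`L i i = -∑_{k ≠ i} ℓ i k`. -/
noncomputable def labelLaplacian {n : ℕ} (ℓ : Fin n → Fin n → ℝ) :
    Matrix (Fin n) (Fin n) ℝ :=
  fun j i => if j = i then -∑ k ∈ univ.filter (· ≠ i), ℓ i k else ℓ i j

/-! Reversing the edges of the tree path from `i` to the root `r` turns a spanning tree
rooted at `r` into one rooted at `i`, and reversing the path from `r` in the new tree undoes
this, so `Φ_{r,i}` is a bijection `Θ_r → Θ_i`. Only the path edges change, each `a → b`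
becoming `b → a`, so the weight gets multiplied by `∏ ℓ(b→a) / ℓ(a→b) = exp (-S(T_i))`. -/

-- `sInf ∅ = 0`: a vertex that never reaches `r` gets depth `0`,
-- hence the reachability hypotheses below.
noncomputable def depth {n : ℕ} (t : Fin n → Fin n) (r v : Fin n) : ℕ :=
  sInf {k | t^[k] v = r}

section Depth

variable {n : ℕ} {t : Fin n → Fin n} {r v : Fin n}

lemma depth_le {k : ℕ} (h : t^[k] v = r) : depth t r v ≤ k :=
  Nat.sInf_le h

lemma iterate_ne_of_lt_depth {k : ℕ} (h : k < depth t r v) : t^[k] v ≠ r :=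
  fun he => (depth_le he).not_gt h

lemma iterate_depth (hv : ∃ k, t^[k] v = r) : t^[depth t r v] v = r :=
  Nat.sInf_mem hv

lemma depth_eq_of_iterate {k : ℕ} (h : t^[k] v = r) (hmin : ∀ m < k, t^[m] v ≠ r) :
    depth t r v = k :=
  (depth_le h).antisymm (not_lt.1 fun hlt => hmin _ hlt (iterate_depth ⟨k, h⟩))

lemma depth_self : depth t r r = 0 :=
  Nat.le_zero.1 (depth_le (Function.iterate_zero_apply t r))

lemma depth_eq_zero_iff (hv : ∃ k, t^[k] v = r) : depth t r v = 0 ↔ v = r := by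
  refine ⟨fun h => ?_, fun h => h ▸ depth_self⟩
  simpa [h] using iterate_depth hv

lemma depth_iterate (hv : ∃ k, t^[k] v = r) {m : ℕ} (hm : m ≤ depth t r v) :
    depth t r (t^[m] v) = depth t r v - m := by
  refine depth_eq_of_iterate ?_ fun k hk => ?_
  · rw [← Function.iterate_add_apply, Nat.sub_add_cancel hm, iterate_depth hv]
  · rw [← Function.iterate_add_apply]
    exact iterate_ne_of_lt_depth (by omega)

lemma depth_apply (hv : ∃ k, t^[k] v = r) (hvr : v ≠ r) :
    depth t r (t v) = depth t r v - 1 := by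
  have hpos : 0 < depth t r v := Nat.pos_of_ne_zero fun h => hvr ((depth_eq_zero_iff hv).1 h)
  simpa using depth_iterate hv hpos

lemma injOn_iterate_depth (hv : ∃ k, t^[k] v = r) :
    Set.InjOn (t^[·] v) (Set.Iic (depth t r v)) := by
  intro a ha b hb hab
  have h := depth_iterate hv ha
  rw [show t^[a] v = t^[b] v from hab, depth_iterate hv hb] at h
  simp only [Set.mem_Iic] at ha hb
  omega

lemma iterate_ne_self_of_le_depth (hv : ∃ k, t^[k] v = r) {m : ℕ} (h0 : m ≠ 0)
    (hm : m ≤ depth t r v) : t^[m] v ≠ v := fun h =>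
  h0 (injOn_iterate_depth hv (Set.mem_Iic.2 hm) (Set.mem_Iic.2 (Nat.zero_le _)) h)

lemma depth_lt (hv : ∃ k, t^[k] v = r) : depth t r v < n := by
  have h := Finset.card_le_card_of_injOn (t := (univ : Finset (Fin n))) (t^[·] v)
    (fun _ _ => mem_coe.2 (mem_univ _))
    ((injOn_iterate_depth hv).mono fun m hm => Nat.lt_succ_iff.1 (mem_range.1 hm))
  simpa using h

end Depth

lemma List.zip_tail_map_range {α : Type*} (f : ℕ → α) (d : ℕ) :
    ((List.range (d + 1)).map f).zip ((List.range (d + 1)).map f).tail =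
      (List.range d).map fun m => (f m, f (m + 1)) := by
  refine List.ext_getElem (by simp) fun m _ _ => ?_
  simp

section TreePath

variable {n : ℕ} {t : Fin n → Fin n} {r : Fin n}

lemma treePathAux_eq_map_range (ht : ∀ v, ∃ k, t^[k] v = r) {k : ℕ} {v : Fin n}
    (hk : depth t r v ≤ k) :
    treePathAux t r k v = (List.range (depth t r v + 1)).map (t^[·] v) := by
  induction k generalizing v with
  | zero => simp [treePathAux, Nat.le_zero.1 hk]
  | succ k ih =>
    by_cases hv : v = r
    · subst hv
      simp [treePathAux, depth_self]
    · have hd := depth_apply (ht v) hv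
      have hpos : depth t r v ≠ 0 := fun h => hv ((depth_eq_zero_iff (ht v)).1 h)
      rw [treePathAux, if_neg hv, ih (by omega), hd,
        Nat.sub_add_cancel (Nat.pos_of_ne_zero hpos),
        List.range_succ_eq_map (n := depth t r v), List.map_cons, List.map_map]
      rfl

lemma treePath_eq_map_range (ht : ∀ v, ∃ k, t^[k] v = r) (v : Fin n) :
    treePath t r v = (List.range (depth t r v + 1)).map (t^[·] v) :=
  treePathAux_eq_map_range ht (depth_lt (ht v)).le

lemma treePath_zip_tail (ht : ∀ v, ∃ k, t^[k] v = r) (v : Fin n) :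
    (treePath t r v).zip (treePath t r v).tail =
      (List.range (depth t r v)).map fun m => (t^[m] v, t^[m + 1] v) := by
  rw [treePath_eq_map_range ht, List.zip_tail_map_range]

lemma mem_treePath (ht : ∀ v, ∃ k, t^[k] v = r) {v w : Fin n} :
    w ∈ treePath t r v ↔ ∃ m ≤ depth t r v, t^[m] v = w := by
  simp only [treePath_eq_map_range ht, List.mem_map, List.mem_range, Nat.lt_succ_iff]

end TreePath

section ReverseTree

variable {n : ℕ} {t : Fin n → Fin n} {r j : Fin n}

lemma reverseTree_apply_iterate_succ (ht : ∀ v, ∃ k, t^[k] v = r) {m : ℕ}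
    (hm : m < depth t r j) : reverseTree t r j (t^[m + 1] j) = t^[m] j := by
  obtain ⟨e, he⟩ : ∃ e, ((List.range (depth t r j)).map fun k => (t^[k] j, t^[k + 1] j)).find?
      (fun e => e.2 == t^[m + 1] j) = some e :=
    Option.isSome_iff_exists.1 <| List.find?_isSome.2
      ⟨_, List.mem_map.2 ⟨m, List.mem_range.2 hm, rfl⟩, beq_self_eq_true _⟩
  obtain ⟨k, hk, rfl⟩ := List.mem_map.1 (List.mem_of_find?_eq_some he)
  obtain rfl : k = m := Nat.succ_injective <| injOn_iterate_depth (ht j)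
    (Set.mem_Iic.2 (List.mem_range.1 hk)) (Set.mem_Iic.2 hm)
    (by simpa using List.find?_some he)
  simp only [reverseTree, treePath_zip_tail ht, he, Option.elim]

lemma reverseTree_apply_of_forall_ne (ht : ∀ v, ∃ k, t^[k] v = r) {v : Fin n}
    (hv : ∀ m < depth t r j, t^[m + 1] j ≠ v) :
    reverseTree t r j v = if v = j then j else t v := by
  have hnone : ((List.range (depth t r j)).map fun k => (t^[k] j, t^[k + 1] j)).find?
      (fun e => e.2 == v) = none := by
    simpa [List.find?_eq_none] using hv
  simp only [reverseTree, treePath_zip_tail ht, hnone, Option.elim]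

lemma reverseTree_apply_self (ht : ∀ v, ∃ k, t^[k] v = r) : reverseTree t r j j = j := by
  refine (reverseTree_apply_of_forall_ne ht fun m hm => ?_).trans (if_pos rfl)
  exact iterate_ne_self_of_le_depth (ht j) m.succ_ne_zero hm

lemma reverseTree_apply_of_notMem (ht : ∀ v, ∃ k, t^[k] v = r) {v : Fin n}
    (hv : v ∉ treePath t r j) : reverseTree t r j v = t v := by
  have hvj : v ≠ j := fun h => hv ((mem_treePath ht).2 ⟨0, Nat.zero_le _, h.symm⟩)
  refine (reverseTree_apply_of_forall_ne ht fun m hm he => ?_).trans (if_neg hvj)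
  exact hv ((mem_treePath ht).2 ⟨m + 1, hm, he⟩)

lemma reverseTree_iterate_root (ht : ∀ v, ∃ k, t^[k] v = r) {k : ℕ}
    (hk : k ≤ depth t r j) : (reverseTree t r j)^[k] r = t^[depth t r j - k] j := by
  induction k with
  | zero => exact (iterate_depth (ht j)).symm
  | succ k ih =>
    rw [Function.iterate_succ_apply', ih (by omega),
      show depth t r j - k = depth t r j - (k + 1) + 1 by omega,
      reverseTree_apply_iterate_succ ht (by omega)]

lemma reverseTree_iterate_iterate (ht : ∀ v, ∃ k, t^[k] v = r) {m : ℕ}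
    (hm : m ≤ depth t r j) : (reverseTree t r j)^[m] (t^[m] j) = j := by
  induction m with
  | zero => rfl
  | succ m ih =>
    rw [Function.iterate_succ_apply, reverseTree_apply_iterate_succ ht hm, ih (by omega)]

lemma depth_reverseTree (ht : ∀ v, ∃ k, t^[k] v = r) :
    depth (reverseTree t r j) j r = depth t r j := by
  refine depth_eq_of_iterate (by simpa using reverseTree_iterate_root ht le_rfl)
    fun k hk he => ?_
  rw [reverseTree_iterate_root ht hk.le] at he
  exact iterate_ne_self_of_le_depth (ht j) (by omega) (Nat.sub_le _ _) he

lemma reverseTree_reaches (ht : ∀ v, ∃ k, t^[k] v = r) (v : Fin n) :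
    ∃ k, (reverseTree t r j)^[k] v = j := by
  induction hd : depth t r v using Nat.strong_induction_on generalizing v with
  | _ d ih =>
    by_cases hv : v ∈ treePath t r j
    · obtain ⟨m, hm, rfl⟩ := (mem_treePath ht).1 hv
      exact ⟨m, reverseTree_iterate_iterate ht hm⟩
    · have hvr : v ≠ r := fun h =>
        hv ((mem_treePath ht).2 ⟨_, le_rfl, (iterate_depth (ht j)).trans h.symm⟩)
      have hpos : d ≠ 0 := fun h => hvr ((depth_eq_zero_iff (ht v)).1 (hd.trans h))
      obtain ⟨k, hk⟩ := ih (d - 1) (by omega) (t v) (by rw [depth_apply (ht v) hvr, hd])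
      exact ⟨k + 1, by rw [Function.iterate_succ_apply, reverseTree_apply_of_notMem ht hv, hk]⟩

lemma reverseTree_reverseTree (hroot : t r = r) (ht : ∀ v, ∃ k, t^[k] v = r) :
    reverseTree (reverseTree t r j) j r = t := by
  have hs := reverseTree_reaches (j := j) ht
  have hds := depth_reverseTree (j := j) ht
  funext v
  by_cases hv : ∃ m < depth t r j, t^[m] j = v
  · obtain ⟨m, hm, rfl⟩ := hv
    have h := reverseTree_apply_iterate_succ hs (j := r) (m := depth t r j - m - 1) (by omega)
    rwa [reverseTree_iterate_root ht (by omega), reverseTree_iterate_root ht (by omega),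
      show depth t r j - (depth t r j - m - 1 + 1) = m by omega,
      show depth t r j - (depth t r j - m - 1) = m + 1 by omega,
      Function.iterate_succ_apply'] at h
  · push Not at hv
    rw [reverseTree_apply_of_forall_ne hs (j := r) fun k hk => ?_]
    · split_ifs with hvr
      · rw [hvr, hroot]
      · refine reverseTree_apply_of_notMem ht fun hmem => ?_
        obtain ⟨m, hm, he⟩ := (mem_treePath ht).1 hmem
        rcases hm.lt_or_eq with hm | rfl
        · exact hv m hm he
        · exact hvr (he.symm.trans (iterate_depth (ht j)))
    · rw [reverseTree_iterate_root ht (by omega)]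
      exact hv _ (by omega)

end ReverseTree

lemma Finset.prod_univ_eq_prod_range_mul_prod_compl {α M : Type*} [Fintype α] [DecidableEq α]
    [CommMonoid M] (f : α → M) {p : ℕ → α} {d : ℕ} (hp : Set.InjOn p (Set.Iic d)) :
    ∏ v, f v = (∏ m ∈ range (d + 1), f (p m)) * ∏ v ∈ ((range (d + 1)).image p)ᶜ, f v := by
  rw [← prod_mul_prod_compl ((range (d + 1)).image p), prod_image]
  exact hp.mono fun m hm => Nat.lt_succ_iff.1 (mem_range.1 hm)

lemma Real.exp_neg_sum_log_div_mul_prod {ι : Type*} (s : Finset ι) {a b : ι → ℝ}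
    (ha : ∀ i ∈ s, 0 < a i) (hb : ∀ i ∈ s, 0 < b i) :
    Real.exp (-∑ i ∈ s, Real.log (a i / b i)) * ∏ i ∈ s, a i = ∏ i ∈ s, b i := by
  rw [← sum_neg_distrib, Real.exp_sum, ← prod_mul_distrib]
  refine prod_congr rfl fun i hi => ?_
  rw [← Real.log_inv, inv_div, Real.exp_log (div_pos (hb i hi) (ha i hi)),
    div_mul_cancel₀ _ (ha i hi).ne']

section SpanningTree

variable {n : ℕ} {ℓ : Fin n → Fin n → ℝ} {t : Fin n → Fin n} {r j : Fin n}

lemma mem_Trees : t ∈ Trees ℓ r ↔ IsSpanningTree ℓ r t := by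
  simp [Trees]

lemma IsSpanningTree.label_iterate_pos (ht : IsSpanningTree ℓ r t) {m : ℕ}
    (hm : m < depth t r j) : 0 < ℓ (t^[m] j) (t^[m + 1] j) := by
  rw [Function.iterate_succ_apply']
  exact ht.2.1 _ (iterate_ne_of_lt_depth hm)

lemma IsSpanningTree.reverseTree (hrev : Reversible ℓ) (ht : IsSpanningTree ℓ r t) (j : Fin n) :
    IsSpanningTree ℓ j (reverseTree t r j) := by
  refine ⟨reverseTree_apply_self ht.2.2, fun v hvj => ?_, reverseTree_reaches ht.2.2⟩
  by_cases hv : ∃ m < depth t r j, t^[m + 1] j = v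
  · obtain ⟨m, hm, rfl⟩ := hv
    rw [reverseTree_apply_iterate_succ ht.2.2 hm]
    exact (hrev _ _).1 (ht.label_iterate_pos hm)
  · push Not at hv
    rw [reverseTree_apply_of_forall_ne ht.2.2 hv, if_neg hvj]
    refine ht.2.1 v fun hvr => ?_
    obtain hd | hd := Nat.eq_zero_or_pos (depth t r j)
    · exact hvj (hvr.trans ((depth_eq_zero_iff (ht.2.2 j)).1 hd).symm)
    · refine hv (depth t r j - 1) (by omega) ?_
      rw [Nat.sub_add_cancel hd, iterate_depth (ht.2.2 j), hvr]

lemma treeWeight_eq_prod_path_mul (ht : ∀ v, ∃ k, t^[k] v = r) (j : Fin n) :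
    treeWeight ℓ r t = (∏ m ∈ range (depth t r j), ℓ (t^[m] j) (t^[m + 1] j)) *
      ∏ v ∈ ((range (depth t r j + 1)).image (t^[·] j))ᶜ, ℓ v (t v) := by
  rw [treeWeight, prod_filter,
    prod_univ_eq_prod_range_mul_prod_compl _ (injOn_iterate_depth (ht j)),
    prod_range_succ, iterate_depth (ht j), if_neg (not_not_intro rfl), mul_one]
  congr 1
  · refine prod_congr rfl fun m hm => ?_
    rw [if_pos (iterate_ne_of_lt_depth (mem_range.1 hm)), Function.iterate_succ_apply']
  · refine prod_congr rfl fun v hv => if_pos fun hvr => mem_compl.1 hv ?_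
    exact mem_image.2 ⟨_, self_mem_range_succ _, (iterate_depth (ht j)).trans hvr.symm⟩

lemma treeWeight_reverseTree (ht : ∀ v, ∃ k, t^[k] v = r) (j : Fin n) :
    treeWeight ℓ j (reverseTree t r j) =
      (∏ m ∈ range (depth t r j), ℓ (t^[m + 1] j) (t^[m] j)) *
        ∏ v ∈ ((range (depth t r j + 1)).image (t^[·] j))ᶜ, ℓ v (t v) := by
  rw [treeWeight, prod_filter,
    prod_univ_eq_prod_range_mul_prod_compl _ (injOn_iterate_depth (ht j)),
    prod_range_succ', Function.iterate_zero_apply, if_neg (not_not_intro rfl), mul_one]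
  congr 1
  · refine prod_congr rfl fun m hm => ?_
    have hm := mem_range.1 hm
    rw [if_pos (iterate_ne_self_of_le_depth (ht j) m.succ_ne_zero hm),
      reverseTree_apply_iterate_succ ht hm]
  · refine prod_congr rfl fun v hv => ?_
    have hv : v ∉ treePath t r j := fun h => by
      obtain ⟨m, hm, rfl⟩ := (mem_treePath ht).1 h
      exact mem_compl.1 hv (mem_image.2 ⟨m, mem_range.2 (Nat.lt_succ_of_le hm), rfl⟩)
    have hvj : v ≠ j := fun h => hv ((mem_treePath ht).2 ⟨0, Nat.zero_le _, h.symm⟩)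
    rw [if_pos hvj, reverseTree_apply_of_notMem ht hv]

lemma pathAction_treePath (ht : ∀ v, ∃ k, t^[k] v = r) (j : Fin n) :
    pathAction ℓ (treePath t r j) = ∑ m ∈ range (depth t r j),
      Real.log (ℓ (t^[m] j) (t^[m + 1] j) / ℓ (t^[m + 1] j) (t^[m] j)) := by
  rw [pathAction, treePath_zip_tail ht, List.map_map]
  rfl

lemma exp_neg_pathAction_mul_treeWeight (hrev : Reversible ℓ) (ht : IsSpanningTree ℓ r t)
    (j : Fin n) :
    Real.exp (-pathAction ℓ (treePath t r j)) * treeWeight ℓ r t =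
      treeWeight ℓ j (reverseTree t r j) := by
  rw [pathAction_treePath ht.2.2, treeWeight_eq_prod_path_mul ht.2.2 j,
    treeWeight_reverseTree ht.2.2, ← mul_assoc, Real.exp_neg_sum_log_div_mul_prod]
  · exact fun m hm => ht.label_iterate_pos (mem_range.1 hm)
  · exact fun m hm => (hrev _ _).1 (ht.label_iterate_pos (mem_range.1 hm))

end SpanningTree

theorem tilde_rho_eq_matrix_tree_general {n : ℕ} (hn : 0 < n) (ℓ : Fin n → Fin n → ℝ)
    (hrev : Reversible ℓ) (i : Fin n) :
    ∑ T ∈ Trees ℓ ⟨0, hn⟩,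
        Real.exp (-pathAction ℓ (treePath T ⟨0, hn⟩ i)) * treeWeight ℓ ⟨0, hn⟩ T =
      ∑ T' ∈ Trees ℓ i, treeWeight ℓ i T' := by
  refine sum_nbij' (reverseTree · ⟨0, hn⟩ i) (reverseTree · i ⟨0, hn⟩) ?_ ?_ ?_ ?_ ?_ <;>
    simp only [mem_Trees]
  · exact fun T hT => hT.reverseTree hrev i
  · exact fun T hT => hT.reverseTree hrev _
  · exact fun T hT => reverseTree_reverseTree hT.1 hT.2.2
  · exact fun T hT => reverseTree_reverseTree hT.1 hT.2.2
  · exact fun T hT => exp_neg_pathAction_mul_treeWeight hrev hT i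

/-- `ρ̃_i = ∑_{T ∈ Θ_1} exp (-S(T_i)) q(T)` coincides with the Matrix-Tree
vector `∑_{T' ∈ Θ_i} q(T')`. -/
theorem tilde_rho_eq_matrix_tree {n : ℕ} (hn : 0 < n) (ℓ : Fin n → Fin n → ℝ)
    (hℓ : ∀ i j, 0 ≤ ℓ i j) (hsc : StronglyConnected ℓ) (hrev : Reversible ℓ)
    (i : Fin n) :
    ∑ T ∈ Trees ℓ ⟨0, hn⟩,
        Real.exp (-pathAction ℓ (treePath T ⟨0, hn⟩ i)) * treeWeight ℓ ⟨0, hn⟩ T =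
      ∑ T' ∈ Trees ℓ i, treeWeight ℓ i T' :=
  tilde_rho_eq_matrix_tree_general hn ℓ hrev i
end

section
/- Common factor of tree weights sharing a path: let Γ ∈ M(i,j) be a minimal path from i to j and T(Γ) = {T ∈ Θ_j : T_i = Γ}. Then q(T(Γ)) := ∑_{T ∈ T(Γ)} q(T) = q(Γ) · α, and moreover for the reversed path Γ̂ ∈ M(j,i) and T(Γ̂) = {Φ_{j,i}(T) : T ∈ T(Γ)} ⊆ Θ_i, one has ∑_{T' ∈ T(Γ̂)} q(T') = q(Γ̂) · α for the same constant α ≥ 0. -/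
open Finset

attribute [local instance] Classical.propDecidable

/-!
If `T ∈ Θ_j` has `T_i = Γ`, the parent of each vertex of `Γ` other than `j` is its successor
on `Γ`, so `q(T)` factors as `q(Γ)` times the product of the labels of the edges leaving the
vertices off `Γ`. The reversal `Φ_{j,i}` makes each vertex of `Γ` other than `i` point to its
predecessor and changes no other edge, so `q(Φ_{j,i} T)` is `q(Γ̂)` times the same off-path
product. Hence `α` is the sum of the off-path products over `T(Γ)`. Summing over the image is
legitimate because `Φ_{j,i}` is injective on `T(Γ)`: such a `T` is determined by `Γ` on `Γ`
and agrees with `Φ_{j,i} T` off `Γ`.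
-/

namespace List

variable {α : Type*}

theorem map_fst_zip_tail : ∀ l : List α, (l.zip l.tail).map Prod.fst = l.dropLast
  | [] | [_] => rfl
  | a :: b :: m => by
    have ih := map_fst_zip_tail (b :: m)
    rw [tail_cons] at ih
    rw [tail_cons, zip_cons_cons, map_cons, ih, dropLast_cons_cons]

theorem map_snd_zip_tail (l : List α) : (l.zip l.tail).map Prod.snd = l.tail :=
  map_snd_zip (by cases l <;> simp)

theorem IsChain.rel_of_mem_zip_tail {R : α → α → Prop} :
    ∀ {l : List α}, l.IsChain R → ∀ {e}, e ∈ l.zip l.tail → R e.1 e.2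
  | [], _, _, he | [_], _, _, he => by simp at he
  | a :: b :: m, h, e, he => by
    rw [isChain_cons_cons] at h
    rcases mem_cons.mp he with rfl | he
    · exact h.1
    · exact h.2.rel_of_mem_zip_tail he

theorem zip_tail_reverse (l : List α) :
    l.reverse.zip l.reverse.tail = ((l.zip l.tail).map Prod.swap).reverse := by
  apply ext_getElem
  · simp
  · intro k h₁ h₂
    simp only [length_zip, length_tail, length_reverse] at h₁
    simp only [getElem_zip, getElem_reverse, getElem_tail, getElem_map, Prod.swap_prod_mk,
      length_map, length_zip, length_tail, Prod.mk.injEq]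
    constructor <;> congr 1 <;> omega

theorem toFinset_erase_of_getLast? [DecidableEq α] {l : List α} {a : α}
    (hl : l.getLast? = some a) (hnd : l.Nodup) : l.toFinset.erase a = l.dropLast.toFinset := by
  obtain ⟨d, rfl⟩ : ∃ d, l = d ++ [a] := ⟨_, (dropLast_append_getLast? a hl).symm⟩
  have had : a ∉ d := fun h => (nodup_append.mp hnd).2.2 a h a (mem_singleton_self a) rfl
  ext v
  simp only [mem_erase, mem_toFinset, mem_append, mem_singleton, dropLast_concat]
  exact ⟨fun h => h.2.resolve_right h.1, fun h => ⟨fun hva => had (hva ▸ h), .inl h⟩⟩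

theorem toFinset_erase_of_head? [DecidableEq α] {l : List α} {a : α}
    (hl : l.head? = some a) (hnd : l.Nodup) : l.toFinset.erase a = l.tail.toFinset := by
  obtain ⟨m, rfl⟩ : ∃ m, l = a :: m := by cases l <;> simp_all
  rw [toFinset_cons, erase_insert (by simpa using (nodup_cons.mp hnd).1), tail_cons]

end List

theorem Finset.prod_filter_ne_eq_prod_toFinset_erase_mul {ι M : Type*} [Fintype ι]
    [DecidableEq ι] [CommMonoid M] (f : ι → M) {l : List ι} {a : ι} (ha : a ∈ l) :
    ∏ v ∈ univ.filter (· ≠ a), f v =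
      (∏ v ∈ l.toFinset.erase a, f v) * ∏ v ∈ univ.filter (· ∉ l), f v := by
  have h_off : univ.filter (fun v => v ≠ a ∧ v ∉ l) = univ.filter (· ∉ l) :=
    filter_congr fun v _ => and_iff_right_of_imp fun hv h => hv (h ▸ ha)
  rw [← prod_filter_mul_prod_filter_not _ (· ∈ l), filter_filter, filter_filter, h_off]
  congr 2
  ext v
  simp

section TreePath

variable {n : ℕ} {t : Fin n → Fin n} {r i : Fin n}

theorem head?_treePathAux : ∀ (k : ℕ) (v : Fin n), (treePathAux t r k v).head? = some v
  | 0, _ => rfl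
  | k + 1, v => by unfold treePathAux; split <;> rfl

theorem isChain_treePathAux : ∀ (k : ℕ) (v : Fin n), (treePathAux t r k v).IsChain (t · = ·)
  | 0, _ => List.isChain_singleton _
  | k + 1, v => by
    unfold treePathAux
    split
    · exact List.isChain_singleton _
    · rw [List.isChain_cons]
      refine ⟨fun w hw => ?_, isChain_treePathAux k (t v)⟩
      rw [head?_treePathAux] at hw
      exact Option.some_inj.mp hw

theorem head?_treePath : (treePath t r i).head? = some i := head?_treePathAux n i

theorem apply_eq_of_mem_zip_tail_treePath {e : Fin n × Fin n}
    (he : e ∈ (treePath t r i).zip (treePath t r i).tail) : t e.1 = e.2 :=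
  (isChain_treePathAux n i).rel_of_mem_zip_tail he

theorem reverseTree_of_not_mem {v : Fin n} (hv : v ∉ treePath t r i) :
    reverseTree t r i v = t v := by
  have hfind : ((treePath t r i).zip (treePath t r i).tail).find? (·.2 == v) = none := by
    refine List.find?_eq_none.mpr fun e he hev => hv ?_
    rw [← beq_iff_eq.mp hev]
    exact List.mem_of_mem_tail (List.map_snd_zip_tail _ ▸ List.mem_map_of_mem he)
  have hvi : v ≠ i := fun h => hv (h ▸ List.mem_of_head? head?_treePath)
  simp only [reverseTree, hfind, Option.elim_none, if_neg hvi]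

theorem reverseTree_of_mem_zip_tail (hnd : (treePath t r i).Nodup) {e : Fin n × Fin n}
    (he : e ∈ (treePath t r i).zip (treePath t r i).tail) : reverseTree t r i e.2 = e.1 := by
  set pairs := (treePath t r i).zip (treePath t r i).tail
  obtain ⟨e', hfind⟩ : ∃ e', pairs.find? (·.2 == e.2) = some e' :=
    Option.isSome_iff_exists.mp (List.find?_isSome.mpr ⟨e, he, by simp⟩)
  have hsnd : (pairs.map Prod.snd).Nodup := by
    rw [List.map_snd_zip_tail]
    exact hnd.sublist (List.tail_sublist _)
  have he' : e' = e := List.inj_on_of_nodup_map hsnd (List.mem_of_find?_eq_some hfind) he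
    (by simpa using List.find?_some hfind)
  subst he'
  simp only [reverseTree]
  rw [hfind]
  rfl

theorem reverseTree_injOn {Γ : List (Fin n)} (hlast : Γ.getLast? = some r) :
    Set.InjOn (reverseTree · r i) {t | t r = r ∧ treePath t r i = Γ} := by
  rintro t₁ ⟨hroot₁, hΓ₁⟩ t₂ ⟨hroot₂, hΓ₂⟩ h
  funext v
  by_cases hv : v ∈ Γ
  · rw [← List.dropLast_append_getLast? r hlast, List.mem_append, List.mem_singleton] at hv
    rcases hv with hv | rfl
    · obtain ⟨e, he, rfl⟩ := List.mem_map.mp (List.map_fst_zip_tail Γ ▸ hv)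
      rw [apply_eq_of_mem_zip_tail_treePath (t := t₁) (hΓ₁ ▸ he),
        apply_eq_of_mem_zip_tail_treePath (t := t₂) (hΓ₂ ▸ he)]
    · rw [hroot₁, hroot₂]
  · rw [← reverseTree_of_not_mem (t := t₁) (hΓ₁ ▸ hv),
      ← reverseTree_of_not_mem (t := t₂) (hΓ₂ ▸ hv)]
    exact congrFun h v

end TreePath

section Weights

variable {n : ℕ} (ℓ : Fin n → Fin n → ℝ)

def offPathWeight (Γ : List (Fin n)) (t : Fin n → Fin n) : ℝ :=
  ∏ v ∈ univ.filter (· ∉ Γ), ℓ v (t v)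

theorem pathWeight_eq_prod_dropLast {t : Fin n → Fin n} {Γ : List (Fin n)}
    (ht : ∀ e ∈ Γ.zip Γ.tail, t e.1 = e.2) :
    pathWeight ℓ Γ = (Γ.dropLast.map fun v => ℓ v (t v)).prod := by
  rw [pathWeight, ← List.map_fst_zip_tail, List.map_map]
  congr 1
  exact List.map_congr_left fun e he => by simp [ht e he]

theorem pathWeight_reverse_eq_prod_tail {s : Fin n → Fin n} {Γ : List (Fin n)}
    (hs : ∀ e ∈ Γ.zip Γ.tail, s e.2 = e.1) :
    pathWeight ℓ Γ.reverse = (Γ.tail.map fun v => ℓ v (s v)).prod := by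
  rw [pathWeight, List.zip_tail_reverse, List.map_reverse, List.prod_reverse, List.map_map]
  conv_rhs => rw [← List.map_snd_zip_tail, List.map_map]
  congr 1
  exact List.map_congr_left fun e he => by simp [hs e he]

variable {t : Fin n → Fin n} {r i : Fin n} {Γ : List (Fin n)}

theorem treeWeight_eq_pathWeight_mul_offPathWeight (hΓ : treePath t r i = Γ) (hnd : Γ.Nodup)
    (hlast : Γ.getLast? = some r) :
    treeWeight ℓ r t = pathWeight ℓ Γ * offPathWeight ℓ Γ t := by
  subst hΓ
  rw [treeWeight, prod_filter_ne_eq_prod_toFinset_erase_mul _ (List.mem_of_getLast? hlast),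
    List.toFinset_erase_of_getLast? hlast hnd,
    List.prod_toFinset _ (hnd.sublist (List.dropLast_sublist _)),
    pathWeight_eq_prod_dropLast ℓ fun e he => apply_eq_of_mem_zip_tail_treePath he]
  rfl

theorem treeWeight_reverseTree_eq_pathWeight_reverse_mul_offPathWeight
    (hΓ : treePath t r i = Γ) (hnd : Γ.Nodup) :
    treeWeight ℓ i (reverseTree t r i) = pathWeight ℓ Γ.reverse * offPathWeight ℓ Γ t := by
  subst hΓ
  rw [treeWeight, prod_filter_ne_eq_prod_toFinset_erase_mul _ (List.mem_of_head? head?_treePath),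
    List.toFinset_erase_of_head? head?_treePath hnd,
    List.prod_toFinset _ (hnd.sublist (List.tail_sublist _)),
    pathWeight_reverse_eq_prod_tail ℓ fun e he => reverseTree_of_mem_zip_tail hnd he,
    offPathWeight]
  congr 1
  exact prod_congr rfl fun v hv => by rw [reverseTree_of_not_mem (mem_filter.mp hv).2]

end Weights

theorem common_factor_tree_weights_general {n : ℕ} (ℓ : Fin n → Fin n → ℝ)
    (hℓ : ∀ i j, 0 ≤ ℓ i j)
    (i j : Fin n) (Γ : List (Fin n))
    (hΓ : IsMinPathFrom ℓ i j Γ) :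
    ∃ α : ℝ, 0 ≤ α ∧
      (∑ T ∈ (Trees ℓ j).filter (fun T => treePath T j i = Γ),
          treeWeight ℓ j T) = pathWeight ℓ Γ * α ∧
      (∑ T' ∈ ((Trees ℓ j).filter (fun T => treePath T j i = Γ)).image
          (fun T => reverseTree T j i), treeWeight ℓ i T') =
        pathWeight ℓ Γ.reverse * α := by
  obtain ⟨⟨-, -, hlast⟩, hnd⟩ := hΓ
  set S := (Trees ℓ j).filter (fun T => treePath T j i = Γ)
  have hS : ∀ T ∈ S, T j = j ∧ treePath T j i = Γ := fun T hT =>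
    ⟨(mem_filter.mp (mem_filter.mp hT).1).2.1, (mem_filter.mp hT).2⟩
  refine ⟨∑ T ∈ S, offPathWeight ℓ Γ T,
    sum_nonneg fun T _ => prod_nonneg fun v _ => hℓ _ _, ?_, ?_⟩
  · rw [mul_sum]
    exact sum_congr rfl fun T hT =>
      treeWeight_eq_pathWeight_mul_offPathWeight ℓ (hS T hT).2 hnd hlast
  · rw [sum_image ((reverseTree_injOn hlast).mono hS), mul_sum]
    exact sum_congr rfl fun T hT =>
      treeWeight_reverseTree_eq_pathWeight_reverse_mul_offPathWeight ℓ (hS T hT).2 hnd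

/-- Common factor of tree weights sharing a path: for a minimal path `Γ` from
`i` to `j`, `q(T(Γ)) = q(Γ)·α` and `q(T(Γ̂)) = q(Γ̂)·α` for the same `α ≥ 0`,
where `T(Γ) = {T ∈ Θ_j : T_i = Γ}` and `T(Γ̂)` is its image under the
tree-reversal bijection `Φ_{j,i}`. -/
theorem common_factor_tree_weights {n : ℕ} (ℓ : Fin n → Fin n → ℝ)
    (hℓ : ∀ i j, 0 ≤ ℓ i j) (hsc : StronglyConnected ℓ) (hrev : Reversible ℓ)
    (i j : Fin n) (hij : i ≠ j) (Γ : List (Fin n))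
    (hΓ : IsMinPathFrom ℓ i j Γ) :
    ∃ α : ℝ, 0 ≤ α ∧
      (∑ T ∈ (Trees ℓ j).filter (fun T => treePath T j i = Γ),
          treeWeight ℓ j T) = pathWeight ℓ Γ * α ∧
      (∑ T' ∈ ((Trees ℓ j).filter (fun T => treePath T j i = Γ)).image
          (fun T => reverseTree T j i), treeWeight ℓ i T') =
        pathWeight ℓ Γ.reverse * α :=
  common_factor_tree_weights_general ℓ hℓ i j Γ hΓ
end
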